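/- Let n ≥ 2 and let τ: W(T_n) → {a,b} be such that every interval of rank at most 3 in the butterfly poset T_n has a unique rising maximal chain. Then τ is a triple assignment: every non-trivial interval of T_n has a unique rising maximal chain. -/

import Mathlib

/-!
Induct on the rank of `[x, y]`. Once every `z` with `x < z < y` has a unique rising chain to `y`,
write `t z` for the element following `z` on it; the rising chains of `[x, y]` are then the
`x :: w :: t w :: ⋯` with `x ⋖ w` and `τ x w (t w) = 𝐚`. As each rank of `T_n` has two elements,
uniqueness in intervals of rank 2 gives: `z ⋖ u`, `z ⋖ w` and `τ z w (t u) = 𝐚` force `w = t z`.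
Hence, for any `A ⋗ x`, the rising chain `x w₁ w₂ t(t A)` of the rank-3 interval `[x, t (t A)]`
has `w₂ = t w₁`, producing a suitable `w = w₁`; and if `A` and `B` are both suitable then the
middle of the rising chain of `[A, t (t B)]` is `t A`, so `x A (t A) t(t B)` and
`x B (t B) t(t B)` are rising chains of the same rank-3 interval, whence `A = B`.
-/

open Finset

section ChainDefs
variable {α : Type*} [PartialOrder α]

/-- `l` is a saturated (maximal) chain from `x` to `y`, given as a list. -/
def SatChain (x y : α) (l : List α) : Prop :=
  l.Chain' (· ⋖ ·) ∧ l.head? = some x ∧ l.getLast? = some y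

/-- A chain is rising for `τ` (where `true` codes the letter 𝐚 and `false` codes 𝐛)
if every consecutive triple is mapped to 𝐚. -/
def RisingOn (τ : α → α → α → Bool) (l : List α) : Prop :=
  ∀ (i : ℕ) (h : i + 2 < l.length),
    τ (l.get ⟨i, by omega⟩) (l.get ⟨i + 1, by omega⟩) (l.get ⟨i + 2, by omega⟩) = true

/-- A triple assignment: every non-trivial interval has a unique rising maximal chain. -/
def IsTripleAssignment (τ : α → α → α → Bool) : Prop :=
  ∀ x y : α, x < y → ∃! l : List α, SatChain x y l ∧ RisingOn τ l

/-- An `R`-labeling with label set `Λ` and relation `sim`: every non-trivial interval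
has a unique maximal chain whose successive labels are related by `sim`. -/
def IsRLabeling {Λ : Type*} (sim : Λ → Λ → Prop) (lab : α → α → Λ) : Prop :=
  ∀ x y : α, x < y → ∃! l : List α,
    SatChain x y l ∧ ∀ (i : ℕ) (h : i + 2 < l.length),
      sim (lab (l.get ⟨i, by omega⟩) (l.get ⟨i + 1, by omega⟩))
          (lab (l.get ⟨i + 1, by omega⟩) (l.get ⟨i + 2, by omega⟩))

/-- `y` is a breakpoint for `τ`: the value `τ x y z` does not depend on `x ⋖ y` and `y ⋖ z`. -/
def IsBreakpoint (τ : α → α → α → Bool) (y : α) : Prop :=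
  ∃ v : Bool, ∀ x z : α, x ⋖ y → y ⋖ z → τ x y z = v

end ChainDefs

section FlagDefs
variable {α : Type*} [PartialOrder α] [BoundedOrder α]

/-- `rk` is a rank function making the bounded poset graded. -/
def IsGraded (rk : α → ℕ) : Prop :=
  rk ⊥ = 0 ∧ ∀ x y : α, x ⋖ y → rk y = rk x + 1

/-- Flag `f`-vector entry: the number of chains `0̂ < x₁ < ⋯ < x_k < 1̂`
passing exactly through the ranks in `S`. -/
noncomputable def flagF (rk : α → ℕ) (S : Finset ℕ) : ℕ :=
  Nat.card {c : Finset α // IsChain (· ≤ ·) (↑c : Set α) ∧ c.image rk = S ∧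
    c.card = S.card ∧ ∀ x ∈ c, ⊥ < x ∧ x < ⊤}

/-- Flag `h`-vector entry: `h_S = ∑_{T ⊆ S} (-1)^{|S∖T|} f_T`. -/
noncomputable def flagH (rk : α → ℕ) (S : Finset ℕ) : ℤ :=
  ∑ T ∈ S.powerset, (-1) ^ (S.card - T.card) * (flagF rk T : ℤ)

/-- The descent set of a maximal chain `0̂ = x₀ ⋖ x₁ ⋖ ⋯ ⋖ x_n = 1̂` with respect to `τ`:
those `i` with `τ (x_{i-1}) (x_i) (x_{i+1}) = 𝐛`. -/
def descSet (τ : α → α → α → Bool) (l : List α) : Finset ℕ :=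
  (Finset.Icc 1 (l.length - 2)).filter
    (fun i => τ (l.getD (i - 1) ⊥) (l.getD i ⊥) (l.getD (i + 1) ⊥) = false)

end FlagDefs

/-- The butterfly poset `T_n`: one element at ranks `0` and `n` and two elements
(`side = true/false`) at each rank `1 ≤ i ≤ n-1`; any two elements of distinct
ranks are comparable. -/
structure Butt (n : ℕ) where
  rk : ℕ
  side : Bool
  hle : rk ≤ n
  hb : rk = 0 ∨ rk = n → side = false

theorem Butt.ext' {n : ℕ} {x y : Butt n} (h1 : x.rk = y.rk) (h2 : x.side = y.side) :
    x = y := by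
  cases x; cases y; simp_all

instance {n : ℕ} : PartialOrder (Butt n) where
  le x y := x = y ∨ x.rk < y.rk
  le_refl x := Or.inl rfl
  le_trans x y z hxy hyz := by
    rcases hxy with rfl | h
    · exact hyz
    · rcases hyz with rfl | h'
      · exact Or.inr h
      · exact Or.inr (h.trans h')
  le_antisymm x y hxy hyx := by
    rcases hxy with rfl | h
    · rfl
    · rcases hyx with rfl | h'
      · rfl
      · omega

instance {n : ℕ} : BoundedOrder (Butt n) where
  bot := ⟨0, false, Nat.zero_le n, fun _ => rfl⟩
  top := ⟨n, false, le_refl n, fun _ => rfl⟩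
  bot_le x := by
    by_cases h : x.rk = 0
    · exact Or.inl (Butt.ext' h.symm (x.hb (Or.inl h)).symm)
    · exact Or.inr (by simpa using Nat.pos_of_ne_zero h)
  le_top x := by
    by_cases h : x.rk = n
    · exact Or.inl (Butt.ext' h (x.hb (Or.inr h)))
    · exact Or.inr (lt_of_le_of_ne x.hle h)

/-- The poset `P_n`: two copies (`copy = true/false`) of the butterfly poset `T_n`
glued along their minimum and maximum elements. -/
structure Glue (n : ℕ) where
  rk : ℕ
  side : Bool
  copy : Bool
  hle : rk ≤ n
  hb : rk = 0 ∨ rk = n → side = false ∧ copy = false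

theorem Glue.ext' {n : ℕ} {x y : Glue n} (h1 : x.rk = y.rk) (h2 : x.side = y.side)
    (h3 : x.copy = y.copy) : x = y := by
  cases x; cases y; simp_all

instance {n : ℕ} : PartialOrder (Glue n) where
  le x y := x = y ∨ (x.rk < y.rk ∧ (x.copy = y.copy ∨ x.rk = 0 ∨ y.rk = n))
  le_refl x := Or.inl rfl
  le_trans x y z hxy hyz := by
    rcases hxy with rfl | ⟨h1, h2⟩
    · exact hyz
    · rcases hyz with rfl | ⟨h3, h4⟩
      · exact Or.inr ⟨h1, h2⟩
      · refine Or.inr ⟨h1.trans h3, ?_⟩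
        rcases h2 with hc | h0 | hn
        · rcases h4 with hc' | h0' | hn'
          · exact Or.inl (hc.trans hc')
          · omega
          · exact Or.inr (Or.inr hn')
        · exact Or.inr (Or.inl h0)
        · have := z.hle; omega
  le_antisymm x y hxy hyx := by
    rcases hxy with rfl | ⟨h1, _⟩
    · rfl
    · rcases hyx with rfl | ⟨h2, _⟩
      · rfl
      · omega

instance {n : ℕ} : BoundedOrder (Glue n) where
  bot := ⟨0, false, false, Nat.zero_le n, fun _ => ⟨rfl, rfl⟩⟩
  top := ⟨n, false, false, le_refl n, fun _ => ⟨rfl, rfl⟩⟩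
  bot_le x := by
    by_cases h : x.rk = 0
    · exact Or.inl (Glue.ext' h.symm (x.hb (Or.inl h)).1.symm (x.hb (Or.inl h)).2.symm)
    · exact Or.inr ⟨by simpa using Nat.pos_of_ne_zero h, Or.inr (Or.inl rfl)⟩
  le_top x := by
    by_cases h : x.rk = n
    · exact Or.inl (Glue.ext' h (x.hb (Or.inr h)).1 (x.hb (Or.inr h)).2)
    · exact Or.inr ⟨lt_of_le_of_ne x.hle h, Or.inr (Or.inr rfl)⟩

/-- Eulerian condition (counting form): every non-trivial interval has as many
elements of even rank as of odd rank. -/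
def EulerianCount {α : Type*} [PartialOrder α] (rk : α → ℕ) : Prop :=
  ∀ x y : α, x < y →
    Nat.card {z : α // z ∈ Set.Icc x y ∧ Even (rk z - rk x)} =
    Nat.card {z : α // z ∈ Set.Icc x y ∧ ¬ Even (rk z - rk x)}

section AbIndex

/-- The variable 𝐚 of the non-commutative polynomial ring `ℤ⟨𝐚,𝐛⟩`,
realized as the monoid algebra of the free monoid on two letters. -/
noncomputable def abA : MonoidAlgebra ℤ (FreeMonoid Bool) :=
  MonoidAlgebra.single (FreeMonoid.ofList [true]) 1

/-- The variable 𝐛. -/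
noncomputable def abB : MonoidAlgebra ℤ (FreeMonoid Bool) :=
  MonoidAlgebra.single (FreeMonoid.ofList [false]) 1

/-- The 𝐚𝐛-monomial `u_S` of length `n-1`, with 𝐛 in the positions of `S`. -/
def abMonomial (n : ℕ) (S : Finset ℕ) : FreeMonoid Bool :=
  FreeMonoid.ofList ((List.range (n - 1)).map (fun j => decide ((j + 1) ∉ S)))

/-- The 𝐚𝐛-index `Ψ(P) = ∑_S h_S u_S` of a bounded poset of rank `n`
with rank function `rk`. -/
noncomputable def abIndex {α : Type*} [PartialOrder α] [BoundedOrder α]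
    (rk : α → ℕ) (n : ℕ) : MonoidAlgebra ℤ (FreeMonoid Bool) :=
  ∑ S ∈ (Finset.Icc 1 (n - 1)).powerset,
    MonoidAlgebra.single (abMonomial n S) (flagH rk S)

/-- The weight `wt(c)` of a maximal chain, as an 𝐚𝐛-monomial. -/
def chainWeight {α : Type*} [PartialOrder α] [OrderBot α]
    (τ : α → α → α → Bool) (l : List α) : FreeMonoid Bool :=
  FreeMonoid.ofList ((List.range (l.length - 2)).map
    (fun i => τ (l.getD i ⊥) (l.getD (i + 1) ⊥) (l.getD (i + 2) ⊥)))

end AbIndex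

section RisingOn
variable {α : Type*} {τ : α → α → α → Bool}

theorem RisingOn.of_cons {a : α} {l : List α} (h : RisingOn τ (a :: l)) : RisingOn τ l :=
  fun i hi => h (i + 1) (by simp; omega)

theorem risingOn_pair (a b : α) : RisingOn τ [a, b] :=
  fun i hi => absurd hi (by simp)

theorem risingOn_cons_cons_cons_iff {a b c : α} {l : List α} :
    RisingOn τ (a :: b :: c :: l) ↔ τ a b c = true ∧ RisingOn τ (b :: c :: l) := by
  refine ⟨fun h => ⟨h 0 (by simp), h.of_cons⟩, fun ⟨habc, h⟩ i hi => ?_⟩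
  rcases i with _ | i
  · exact habc
  · exact h i (by simp at hi ⊢; omega)

end RisingOn

section RisingChain
variable {α : Type*} [PartialOrder α] {τ : α → α → α → Bool}

theorem satChain_iff {x y : α} {l : List α} :
    SatChain x y l ↔ l.IsChain (· ⋖ ·) ∧ l.head? = some x ∧ l.getLast? = some y :=
  Iff.rfl

theorem satChain_singleton_iff {x y a : α} : SatChain x y [a] ↔ a = x ∧ a = y := by
  simp [satChain_iff, eq_comm]

theorem satChain_cons_cons_iff {x y a b : α} {l : List α} :
    SatChain x y (a :: b :: l) ↔ a = x ∧ x ⋖ b ∧ SatChain b y (b :: l) := by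
  simp only [satChain_iff, List.isChain_cons_cons, List.head?_cons, List.getLast?_cons_cons,
    Option.some.injEq, true_and]
  constructor
  · rintro ⟨⟨hab, hl⟩, rfl, hy⟩
    exact ⟨rfl, hab, hl, hy⟩
  · rintro ⟨rfl, hab, hl, hy⟩
    exact ⟨⟨hab, hl⟩, rfl, hy⟩

def RisingChain (τ : α → α → α → Bool) (x y : α) (l : List α) : Prop :=
  SatChain x y l ∧ RisingOn τ l

theorem risingChain_pair_iff {x y a b : α} :
    RisingChain τ x y [a, b] ↔ a = x ∧ x ⋖ b ∧ b = y := by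
  simp [RisingChain, satChain_cons_cons_iff, satChain_singleton_iff, risingOn_pair]

theorem risingChain_cons_cons_cons_iff {x y a b c : α} {l : List α} :
    RisingChain τ x y (a :: b :: c :: l) ↔
      a = x ∧ x ⋖ b ∧ τ x b c = true ∧ RisingChain τ b y (b :: c :: l) := by
  simp only [RisingChain, satChain_cons_cons_iff, risingOn_cons_cons_cons_iff]
  constructor
  · rintro ⟨⟨rfl, hab, hl⟩, habc, h⟩
    exact ⟨rfl, hab, habc, hl, h⟩
  · rintro ⟨rfl, hab, habc, hl, h⟩
    exact ⟨⟨rfl, hab, hl⟩, habc, h⟩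

theorem RisingChain.covBy {x y a b : α} {l : List α} (h : RisingChain τ x y (a :: b :: l)) :
    x ⋖ b :=
  (satChain_cons_cons_iff.1 h.1).2.1

theorem RisingChain.of_cons_cons {x y a b : α} {l : List α}
    (h : RisingChain τ x y (a :: b :: l)) : RisingChain τ b y (b :: l) :=
  ⟨(satChain_cons_cons_iff.1 h.1).2.2, h.2.of_cons⟩

theorem RisingChain.exists_eq_cons_cons {x y : α} {l : List α} (h : RisingChain τ x y l)
    (hxy : x ≠ y) : ∃ v rest, l = x :: v :: rest := by
  rcases l with _ | ⟨a, _ | ⟨v, rest⟩⟩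
  · simp [RisingChain, satChain_iff] at h
  · obtain ⟨rfl, rfl⟩ := satChain_singleton_iff.1 h.1
    exact absurd rfl hxy
  · obtain rfl := (satChain_cons_cons_iff.1 h.1).1
    exact ⟨v, rest, rfl⟩

theorem risingChain_triple {u w v : α} (huw : u ⋖ w) (hwv : w ⋖ v) (hτ : τ u w v = true) :
    RisingChain τ u v [u, w, v] :=
  risingChain_cons_cons_cons_iff.2 ⟨rfl, huw, hτ, risingChain_pair_iff.2 ⟨rfl, hwv, rfl⟩⟩

theorem risingChain_quad {u w₁ w₂ v : α} (h₁ : u ⋖ w₁) (h₂ : w₁ ⋖ w₂) (h₃ : w₂ ⋖ v)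
    (hτ₁ : τ u w₁ w₂ = true) (hτ₂ : τ w₁ w₂ v = true) :
    RisingChain τ u v [u, w₁, w₂, v] :=
  risingChain_cons_cons_cons_iff.2 ⟨rfl, h₁, hτ₁, risingChain_triple h₂ h₃ hτ₂⟩

end RisingChain

section RisingSucc
variable {α : Type*} [PartialOrder α] {τ : α → α → α → Bool} {x y z : α} {t : α → α}

def IsRisingSucc (τ : α → α → α → Bool) (x y : α) (t : α → α) : Prop :=
  ∀ z, x < z → z < y →
    (∃ rest, RisingChain τ z y (z :: t z :: rest)) ∧
      ∀ v rest, RisingChain τ z y (z :: v :: rest) → v = t z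

theorem exists_isRisingSucc (ih : ∀ z, x < z → z < y → ∃! l, RisingChain τ z y l) :
    ∃ t, IsRisingSucc τ x y t := by
  have hsucc : ∀ z, x < z → z < y → ∃ v rest, RisingChain τ z y (z :: v :: rest) := by
    intro z hxz hzy
    obtain ⟨l, hl, -⟩ := ih z hxz hzy
    obtain ⟨v, rest, rfl⟩ := hl.exists_eq_cons_cons hzy.ne
    exact ⟨v, rest, hl⟩
  choose! t rest ht using hsucc
  refine ⟨t, fun z hxz hzy => ⟨⟨rest z, ht z hxz hzy⟩, fun v r hr => ?_⟩⟩
  have heq := (ih z hxz hzy).unique hr (ht z hxz hzy)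
  simp only [List.cons.injEq, true_and] at heq
  exact heq.1

theorem IsRisingSucc.covBy (ht : IsRisingSucc τ x y t) (hxz : x < z) (hzy : z < y) :
    z ⋖ t z :=
  ((ht z hxz hzy).1.choose_spec).covBy

theorem IsRisingSucc.tau_eq_true (ht : IsRisingSucc τ x y t) (hxz : x < z) (hzy : z < y)
    (htz : t z < y) : τ z (t z) (t (t z)) = true := by
  obtain ⟨rest, hr⟩ := (ht z hxz hzy).1
  obtain ⟨w, rest', ⟨⟩⟩ := hr.of_cons_cons.exists_eq_cons_cons htz.ne
  have hw : w = t (t z) :=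
    (ht (t z) (hxz.trans (ht.covBy hxz hzy).lt) htz).2 w rest' hr.of_cons_cons
  exact hw ▸ (risingChain_cons_cons_cons_iff.1 hr).2.2.1

theorem IsRisingSucc.eq_of_tau_eq_true {v : α} (ht : IsRisingSucc τ x y t) (hxz : x < z)
    (hzv : z ⋖ v) (hvy : v < y) (hτ : τ z v (t v) = true) : v = t z := by
  obtain ⟨rest, hr⟩ := (ht v (hxz.trans hzv.lt) hvy).1
  exact (ht z hxz (hzv.lt.trans hvy)).2 v _ (risingChain_cons_cons_cons_iff.2 ⟨rfl, hzv, hτ, hr⟩)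

theorem IsRisingSucc.existsUnique_risingChain (ht : IsRisingSucc τ x y t)
    (ih : ∀ z, x < z → z < y → ∃! l, RisingChain τ z y l) (hy : ∀ w, x ⋖ w → w < y)
    (h : ∃! w, x ⋖ w ∧ τ x w (t w) = true) : ∃! l, RisingChain τ x y l := by
  obtain ⟨w, ⟨hxw, hτ⟩, hw⟩ := h
  obtain ⟨rest, hr⟩ := (ht w hxw.lt (hy w hxw)).1
  refine ⟨x :: w :: t w :: rest, risingChain_cons_cons_cons_iff.2 ⟨rfl, hxw, hτ, hr⟩,
    fun l hl => ?_⟩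
  obtain ⟨v, r, rfl⟩ := hl.exists_eq_cons_cons (hxw.lt.trans (hy w hxw)).ne
  have hxv : x ⋖ v := hl.covBy
  obtain ⟨u, r', ⟨⟩⟩ := hl.of_cons_cons.exists_eq_cons_cons (hy v hxv).ne
  have hu : u = t v := (ht v hxv.lt (hy v hxv)).2 u r' hl.of_cons_cons
  obtain ⟨-, -, hτv, hl'⟩ := risingChain_cons_cons_cons_iff.1 hl
  obtain rfl : v = w := hw v ⟨hxv, hu ▸ hτv⟩
  rw [(ih v hxv.lt (hy v hxv)).unique hl' hr]

end RisingSucc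

namespace Butt
variable {n : ℕ} {τ : Butt n → Butt n → Butt n → Bool} {x y z : Butt n} {t : Butt n → Butt n}

theorem lt_iff_rk_lt : x < y ↔ x.rk < y.rk := by
  refine ⟨fun h => ?_, fun h => lt_of_le_of_ne (Or.inr h) (by rintro rfl; omega)⟩
  rcases h.le with rfl | h'
  · exact absurd rfl h.ne
  · exact h'

theorem covBy_iff : x ⋖ y ↔ y.rk = x.rk + 1 := by
  refine ⟨fun h => ?_, fun h => ⟨lt_iff_rk_lt.2 (by omega), fun w hxw hwy => ?_⟩⟩
  · have hxy := lt_iff_rk_lt.1 h.lt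
    by_contra hne
    let w : Butt n := ⟨x.rk + 1, false, by have := y.hle; omega, fun _ => rfl⟩
    exact h.2 (c := w) (lt_iff_rk_lt.2 (by simp [w])) (lt_iff_rk_lt.2 (by simp [w]; omega))
  · have := lt_iff_rk_lt.1 hxw
    have := lt_iff_rk_lt.1 hwy
    omega

theorem exists_covBy (hx : x.rk < n) : ∃ w, x ⋖ w :=
  ⟨⟨x.rk + 1, false, hx, fun _ => rfl⟩, covBy_iff.2 rfl⟩

theorem eq_or_eq_or_eq_of_rk_eq {a b c : Butt n} (hab : a.rk = b.rk) (hbc : b.rk = c.rk) :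
    a = b ∨ a = c ∨ b = c := by
  have key : a.side = b.side ∨ a.side = c.side ∨ b.side = c.side := by
    cases a.side <;> cases b.side <;> cases c.side <;> simp
  rcases key with h | h | h
  · exact Or.inl (ext' hab h)
  · exact Or.inr (Or.inl (ext' (hab.trans hbc) h))
  · exact Or.inr (Or.inr (ext' hbc h))

theorem satChain_length {l : List (Butt n)} (h : SatChain x y l) :
    x.rk + l.length = y.rk + 1 := by
  induction l generalizing x with
  | nil => simp [satChain_iff] at h
  | cons a l ih =>
    rcases l with _ | ⟨b, l⟩
    · obtain ⟨rfl, rfl⟩ := satChain_singleton_iff.1 h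
      rfl
    · obtain ⟨rfl, hab, hl⟩ := satChain_cons_cons_iff.1 h
      have := ih hl
      have := covBy_iff.1 hab
      simp only [List.length_cons] at *
      omega

theorem exists_tau_of_rk_eq_add_two {u v : Butt n} (h : ∃ l, RisingChain τ u v l)
    (huv : v.rk = u.rk + 2) : ∃ w, u ⋖ w ∧ w ⋖ v ∧ τ u w v = true := by
  obtain ⟨l, hl⟩ := h
  obtain ⟨a, b, c, rfl⟩ :=
    List.length_eq_three.1 (by have := satChain_length hl.1; omega : l.length = 3)
  obtain ⟨-, hub, hτ, hbc⟩ := risingChain_cons_cons_cons_iff.1 hl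
  obtain ⟨-, hbv, rfl⟩ := risingChain_pair_iff.1 hbc
  exact ⟨b, hub, hbv, hτ⟩

theorem exists_tau_of_rk_eq_add_three {u v : Butt n} (h : ∃ l, RisingChain τ u v l)
    (huv : v.rk = u.rk + 3) :
    ∃ w₁ w₂, u ⋖ w₁ ∧ w₁ ⋖ w₂ ∧ w₂ ⋖ v ∧ τ u w₁ w₂ = true ∧ τ w₁ w₂ v = true := by
  obtain ⟨l, hl⟩ := h
  obtain ⟨a, b, c, d, rfl⟩ :=
    List.length_eq_four.1 (by have := satChain_length hl.1; omega : l.length = 4)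
  obtain ⟨-, hub, hτ₁, hbd⟩ := risingChain_cons_cons_cons_iff.1 hl
  obtain ⟨-, hbc, hτ₂, hcd⟩ := risingChain_cons_cons_cons_iff.1 hbd
  obtain ⟨-, hcv, rfl⟩ := risingChain_pair_iff.1 hcd
  exact ⟨b, c, hub, hbc, hcv, hτ₁, hτ₂⟩

theorem rk_risingSucc (ht : IsRisingSucc τ x y t) (hxz : x < z) (hzy : z.rk < y.rk) :
    (t z).rk = z.rk + 1 :=
  covBy_iff.1 (ht.covBy hxz (lt_iff_rk_lt.2 hzy))

theorem lt_risingSucc (ht : IsRisingSucc τ x y t) (hxz : x < z) (hzy : z.rk < y.rk) :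
    x < t z :=
  hxz.trans (ht.covBy hxz (lt_iff_rk_lt.2 hzy)).lt

/-- The rank above `z` has only two elements, so either `w = u`, and the rising chain of `[z, y]`
through `w` forces `w = t z`, or `u = t z`, and uniqueness in `[z, t (t z)]` forces it. -/
theorem eq_risingSucc_of_tau_eq_true {u w : Butt n}
    (h3 : ∀ x y : Butt n, x < y → y.rk - x.rk ≤ 3 → ∃! l, RisingChain τ x y l)
    (ht : IsRisingSucc τ x y t) (hxz : x < z) (hzy : z.rk + 2 ≤ y.rk) (hzu : z ⋖ u)
    (hzw : z ⋖ w) (hτ : τ z w (t u) = true) : w = t z := by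
  have hz : z < y := lt_iff_rk_lt.2 (by omega)
  have htz := rk_risingSucc ht hxz (by omega)
  have htzy : t z < y := lt_iff_rk_lt.2 (by omega)
  have httz := rk_risingSucc ht (lt_risingSucc ht hxz (by omega)) (by omega)
  have hu := covBy_iff.1 hzu
  have hw := covBy_iff.1 hzw
  rcases eq_or_eq_or_eq_of_rk_eq (a := w) (b := u) (c := t z) (by omega) (by omega)
    with rfl | hwz | rfl
  · exact ht.eq_of_tau_eq_true hxz hzw (lt_iff_rk_lt.2 (by omega)) hτ
  · exact hwz
  · have := (h3 z (t (t z)) (lt_iff_rk_lt.2 (by omega)) (by omega)).unique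
      (risingChain_triple hzw (covBy_iff.2 (by omega)) hτ)
      (risingChain_triple (ht.covBy hxz hz) (covBy_iff.2 (by omega))
        (ht.tau_eq_true hxz hz htzy))
    simpa using this

theorem exists_tau_risingSucc
    (h3 : ∀ x y : Butt n, x < y → y.rk - x.rk ≤ 3 → ∃! l, RisingChain τ x y l)
    (ht : IsRisingSucc τ x y t) (hxy : x.rk + 4 ≤ y.rk) :
    ∃ w, x ⋖ w ∧ τ x w (t w) = true := by
  obtain ⟨A, hxA⟩ := exists_covBy (x := x) (by have := y.hle; omega)
  have hA := covBy_iff.1 hxA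
  have htA := rk_risingSucc ht hxA.lt (by omega)
  have httA := rk_risingSucc ht (lt_risingSucc ht hxA.lt (by omega)) (by omega)
  obtain ⟨w₁, w₂, hxw₁, hw₁w₂, -, hτ₁, hτ₂⟩ := exists_tau_of_rk_eq_add_three
    (h3 x (t (t A)) (lt_iff_rk_lt.2 (by omega)) (by omega)).exists (by omega)
  have hw₁ := covBy_iff.1 hxw₁
  refine ⟨w₁, hxw₁, ?_⟩
  rwa [← eq_risingSucc_of_tau_eq_true h3 ht hxw₁.lt (by omega) (covBy_iff.2 (by omega))
    hw₁w₂ hτ₂]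

theorem eq_of_tau_risingSucc
    (h3 : ∀ x y : Butt n, x < y → y.rk - x.rk ≤ 3 → ∃! l, RisingChain τ x y l)
    (ht : IsRisingSucc τ x y t) (hxy : x.rk + 4 ≤ y.rk)
    {A B : Butt n} (hxA : x ⋖ A) (hτA : τ x A (t A) = true) (hxB : x ⋖ B)
    (hτB : τ x B (t B) = true) : A = B := by
  have hA := covBy_iff.1 hxA
  have hB := covBy_iff.1 hxB
  have htB := rk_risingSucc ht hxB.lt (by omega)
  have hxtB := lt_risingSucc ht hxB.lt (by omega)
  have httB := rk_risingSucc ht hxtB (by omega)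
  obtain ⟨v, hAv, hv, hτv⟩ := exists_tau_of_rk_eq_add_two
    (h3 A (t (t B)) (lt_iff_rk_lt.2 (by omega)) (by omega)).exists (by omega)
  obtain rfl : v = t A := eq_risingSucc_of_tau_eq_true h3 ht hxA.lt (by omega)
    (covBy_iff.2 (by omega)) hAv hτv
  have hBy : B < y := lt_iff_rk_lt.2 (by omega)
  have htBy : t B < y := lt_iff_rk_lt.2 (by omega)
  have := (h3 x (t (t B)) (lt_iff_rk_lt.2 (by omega)) (by omega)).unique
    (risingChain_quad hxA hAv hv hτA hτv)
    (risingChain_quad hxB (ht.covBy hxB.lt hBy) (ht.covBy hxtB htBy) hτB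
      (ht.tau_eq_true hxB.lt hBy htBy))
  simp only [List.cons.injEq, true_and] at this
  exact this.1

theorem existsUnique_risingChain_of_rk_add_four_le
    (h3 : ∀ x y : Butt n, x < y → y.rk - x.rk ≤ 3 → ∃! l, RisingChain τ x y l)
    (hxy : x.rk + 4 ≤ y.rk)
    (ih : ∀ z, x < z → z < y → ∃! l, RisingChain τ z y l) :
    ∃! l, RisingChain τ x y l := by
  obtain ⟨t, ht⟩ := exists_isRisingSucc ih
  refine ht.existsUnique_risingChain ih
    (fun w hxw => lt_iff_rk_lt.2 (by have := covBy_iff.1 hxw; omega)) ?_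
  obtain ⟨w, hxw, hτw⟩ := exists_tau_risingSucc h3 ht hxy
  exact ⟨w, ⟨hxw, hτw⟩, fun v ⟨hxv, hτv⟩ => eq_of_tau_risingSucc h3 ht hxy hxv hτv hxw hτw⟩

end Butt

theorem butterfly_tripleAssignment_general (n : ℕ)
    (τ : Butt n → Butt n → Butt n → Bool)
    (h3 : ∀ x y : Butt n, x < y → y.rk - x.rk ≤ 3 →
      ∃! l : List (Butt n), SatChain x y l ∧ RisingOn τ l) :
    IsTripleAssignment τ := by
  intro x y hxy
  induction hk : y.rk - x.rk using Nat.strong_induction_on generalizing x with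
  | _ k ih =>
    by_cases hk3 : k ≤ 3
    · exact h3 x y hxy (hk ▸ hk3)
    · have hxy' := Butt.lt_iff_rk_lt.1 hxy
      refine Butt.existsUnique_risingChain_of_rk_add_four_le h3 (by omega)
        fun z hxz hzy => ih _ ?_ z hzy rfl
      have := Butt.lt_iff_rk_lt.1 hxz
      have := Butt.lt_iff_rk_lt.1 hzy
      omega

/-- If every interval of rank at most 3 of the butterfly poset `T_n`
(`n ≥ 2`) has a unique rising maximal chain for `τ`, then `τ` is a triple assignment:
every non-trivial interval has a unique rising maximal chain. -/
theorem butterfly_tripleAssignment (n : ℕ) (hn : 2 ≤ n)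
    (τ : Butt n → Butt n → Butt n → Bool)
    (h3 : ∀ x y : Butt n, x < y → y.rk - x.rk ≤ 3 →
      ∃! l : List (Butt n), SatChain x y l ∧ RisingOn τ l) :
    IsTripleAssignment τ :=
  butterfly_tripleAssignment_general n τ h3
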